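/- For n ≥ 4, let P_{4,n} = {p₁,…,p_n} be the poset with relations generated by p₁ ≼ p₂ ≼ … ≼ p_{n−1} and p_{⌊n/2⌋} ≼ p_n. Then F = Σ_{i=1}^{⌊(n−1)/2⌋} E*_{p_i,p_{n−i}} + Σ_{i=1}^{⌊n/2⌋} E*_{p_i,p_n} is a Frobenius functional on g_A(P_{4,n}), and the spectrum of g_A(P_{4,n}) is binary: ad(F̂) has eigenvalues 0 and 1 each with multiplicity (n²−1)/4 when n is odd and n²/4 when n is even. -/

import Mathlib

/-!
Common definitions: for a finite poset `P`, identified with `{1,…,n}` via a linear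
extension, represented by a relation `le` on `Fin n`, the type-A Lie poset algebra
`gA le` is the Lie subalgebra of `sl(n, ℂ)` spanned by the matrix units `E p q`
for `p ≺ q` together with all trace-zero diagonal matrices (here realized as a
submodule of complex `n × n` matrices, which is closed under the commutator
bracket).  `gFull le` is the full Lie poset algebra `g(P)` (with all diagonal
matrices).  `FS S` is the functional `F_S = ∑_{(p,q) ∈ S} E*_{p,q}`.
-/

namespace LiePosets

noncomputable section

open scoped BigOperators

/-- Complex `n × n` matrices. -/
abbrev M (n : ℕ) : Type := Matrix (Fin n) (Fin n) ℂ

/-- The strict relation `p ≺ q` attached to a poset relation `le`. -/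
def Strict {n : ℕ} (le : Fin n → Fin n → Prop) (p q : Fin n) : Prop := le p q ∧ p ≠ q

/-- The type-A Lie poset algebra `g_A(P)`: trace-zero matrices supported on
relations of the poset (off-diagonal entries vanish off the strict relations). -/
def gA {n : ℕ} (le : Fin n → Fin n → Prop) : Submodule ℂ (M n) where
  carrier := {A | Matrix.trace A = 0 ∧ ∀ p q : Fin n, p ≠ q → ¬ le p q → A p q = 0}
  add_mem' := by
    rintro A B ⟨hA, hA'⟩ ⟨hB, hB'⟩
    exact ⟨by simp [hA, hB], fun p q h1 h2 => by
      simp [Matrix.add_apply, hA' p q h1 h2, hB' p q h1 h2]⟩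
  zero_mem' := ⟨by simp, fun p q _ _ => by simp⟩
  smul_mem' := by
    rintro c A ⟨hA, hA'⟩
    exact ⟨by simp [hA], fun p q h1 h2 => by
      simp [Matrix.smul_apply, hA' p q h1 h2]⟩

/-- The Lie poset algebra `g(P)` (all diagonal matrices allowed). -/
def gFull {n : ℕ} (le : Fin n → Fin n → Prop) : Submodule ℂ (M n) where
  carrier := {A | ∀ p q : Fin n, p ≠ q → ¬ le p q → A p q = 0}
  add_mem' := by
    rintro A B hA hB p q h1 h2
    simp [Matrix.add_apply, hA p q h1 h2, hB p q h1 h2]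
  zero_mem' := fun p q _ _ => by simp
  smul_mem' := by
    rintro c A hA p q h1 h2
    simp [Matrix.smul_apply, hA p q h1 h2]

/-- The functional `F_S = ∑_{(p,q) ∈ S} E*_{p,q}` reading off the sum of the
coefficients of the matrix entries indexed by `S`. -/
def FS {n : ℕ} (S : Finset (Fin n × Fin n)) : M n →ₗ[ℂ] ℂ where
  toFun A := ∑ pq ∈ S, A pq.1 pq.2
  map_add' A B := by simp [Matrix.add_apply, Finset.sum_add_distrib]
  map_smul' c A := by simp [Matrix.smul_apply, Finset.mul_sum]

/-- `F` is a Frobenius functional on the Lie subalgebra (submodule) `g`: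
the kernel of the Kirillov form `B_F(x, y) = F ⁅x, y⁆` on `g` is trivial. -/
def IsFrobeniusOn {n : ℕ} (g : Submodule ℂ (M n)) (F : M n →ₗ[ℂ] ℂ) : Prop :=
  ∀ x ∈ g, (∀ y ∈ g, F ⁅x, y⁆ = 0) → x = 0

/-- `H` is a principal element for `F` on `g`:  `B_F(H, ·) = F` on `g`. -/
def IsPrincipal {n : ℕ} (g : Submodule ℂ (M n)) (F : M n →ₗ[ℂ] ℂ) (H : M n) : Prop :=
  H ∈ g ∧ ∀ y ∈ g, F ⁅H, y⁆ = F y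

/-- The adjoint action `ad H = ⁅H, -⁆` as a linear endomorphism of matrices. -/
def adE {n : ℕ} (H : M n) : Module.End ℂ (M n) :=
  LinearMap.mulLeft ℂ H - LinearMap.mulRight ℂ H

/-- Multiplicity of `μ` as an eigenvalue of `ad H` acting on `g`. -/
def eigMult {n : ℕ} (g : Submodule ℂ (M n)) (H : M n) (μ : ℂ) : ℕ :=
  Module.finrank ℂ ↥(g ⊓ Module.End.eigenspace (adE H) μ)

/-- `g` has a binary spectrum: for any Frobenius functional `F` and corresponding
principal element `H`, the multiset of eigenvalues of `ad H` on `g` consists of an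
equal number of `0`'s and `1`'s. -/
def HasBinarySpectrum {n : ℕ} (g : Submodule ℂ (M n)) : Prop :=
  ∀ (F : M n →ₗ[ℂ] ℂ) (H : M n), IsFrobeniusOn g F → IsPrincipal g F H →
    eigMult g H 0 = eigMult g H 1 ∧
    eigMult g H 0 + eigMult g H 1 = Module.finrank ℂ ↥g

/-- The kernel of the Kirillov form `B_F` on `g`. -/
def kirKer {n : ℕ} (g : Submodule ℂ (M n)) (F : M n →ₗ[ℂ] ℂ) : Submodule ℂ (M n) where
  carrier := {x | x ∈ g ∧ ∀ y ∈ g, F ⁅x, y⁆ = 0}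
  zero_mem' := ⟨g.zero_mem, fun y _ => by simp [Ring.lie_def]⟩
  add_mem' := by
    rintro a b ⟨ha, ha'⟩ ⟨hb, hb'⟩
    exact ⟨g.add_mem ha hb, fun y hy => by
      have h1 := ha' y hy
      have h2 := hb' y hy
      simp only [Ring.lie_def, map_sub] at h1 h2 ⊢
      simp only [add_mul, mul_add, map_add]
      linear_combination h1 + h2⟩
  smul_mem' := by
    rintro c a ⟨ha, ha'⟩
    exact ⟨g.smul_mem c ha, fun y hy => by
      have h1 := ha' y hy
      simp only [Ring.lie_def, map_sub] at h1 ⊢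
      rw [smul_mul_assoc, mul_smul_comm, map_smul, map_smul, smul_eq_mul, smul_eq_mul]
      linear_combination c * h1⟩

/-- The index of the Lie algebra `g`: the minimum over all functionals of the
dimension of the kernel of the corresponding Kirillov form. -/
def lieIndex {n : ℕ} (g : Submodule ℂ (M n)) : ℕ :=
  sInf {d : ℕ | ∃ F : M n →ₗ[ℂ] ℂ, d = Module.finrank ℂ ↥(kirKer g F)}

/-- The underlying undirected graph of the directed graph `Γ_{F_S}`. -/
def gammaGraph {n : ℕ} (S : Finset (Fin n × Fin n)) : SimpleGraph (Fin n) where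
  Adj p q := p ≠ q ∧ ((p, q) ∈ S ∨ (q, p) ∈ S)
  symm := ⟨fun p q h => ⟨h.1.symm, h.2.symm⟩⟩
  loopless := ⟨fun p h => h.1 rfl⟩

/-- `F_S` is small: `S` consists of strict relations of the poset and `Γ_{F_S}`
is a spanning tree of the comparability graph. -/
def Small {n : ℕ} (le : Fin n → Fin n → Prop) (S : Finset (Fin n × Fin n)) : Prop :=
  (∀ pq ∈ S, Strict le pq.1 pq.2) ∧ (gammaGraph S).IsTree

/-- `U_{F_S}(P)`: the sinks of `Γ_{F_S}`. -/
def sinks {n : ℕ} (S : Finset (Fin n × Fin n)) : Set (Fin n) :=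
  {p | (∃ q, (q, p) ∈ S) ∧ ∀ q, (p, q) ∉ S}

/-- `D_{F_S}(P)`: the sources of `Γ_{F_S}`. -/
def sources {n : ℕ} (S : Finset (Fin n × Fin n)) : Set (Fin n) :=
  {p | (∃ q, (p, q) ∈ S) ∧ ∀ q, (q, p) ∉ S}

/-- `B_{F_S}(P)`: the vertices of `Γ_{F_S}` that are neither sinks nor sources. -/
def betweens {n : ℕ} (S : Finset (Fin n × Fin n)) : Set (Fin n) :=
  {p | (∃ q, (p, q) ∈ S) ∧ ∃ q, (q, p) ∈ S}

/-- `U` is a filter (up-closed set) of the poset. -/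
def IsPosetFilter {n : ℕ} (le : Fin n → Fin n → Prop) (U : Set (Fin n)) : Prop :=
  ∀ p ∈ U, ∀ q, le p q → q ∈ U

/-- `D` is an order ideal (down-closed set) of the poset. -/
def IsPosetIdeal {n : ℕ} (le : Fin n → Fin n → Prop) (D : Set (Fin n)) : Prop :=
  ∀ p ∈ D, ∀ q, le q p → q ∈ D

/-- Helper to build elements of `Fin n` from natural numbers. -/
def fmk (n : ℕ) (h : 0 < n) (i : ℕ) : Fin n := ⟨i % n, Nat.mod_lt _ h⟩

/-- Restriction of a matrix along an embedding of index types. -/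
def restrictMat {N K : ℕ} (f : Fin K → Fin N) (B : M N) : M K :=
  Matrix.of fun p q => B (f p) (f q)

/-!
Let `Ĥ` be the diagonal matrix with entries `1` on `p₁, …, p_{⌊n/2⌋}` and `0` on the remaining
elements, shifted by a scalar to have trace zero. Every pair `(p, q)` in `F` runs from the lower
half to the upper half, so `F ∘ ad Ĥ = F` and `Ĥ` is the principal element. No relation of
`P_{4,n}` runs from the upper half to the lower one, so `ad Ĥ` acts on `g_A(P_{4,n})` with
eigenvalues `0` and `1` only; the `1`-eigenspace is spanned by the `E_{p,q}` with `p` in the lower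
and `q` in the upper half, of dimension `⌊n/2⌋ ⌈n/2⌉`. As `ad Ĥ` is a derivation, `B_F` pairs the
`0`-eigenspace with the `1`-eigenspace, so these have equal dimension once `F` is Frobenius.

That `F` is Frobenius is a direct computation. Pairing a kernel element `x` with trace-zero
diagonals shows that its entries balance at every vertex of the tree `Γ_F`, so `x` vanishes on
the edges of `Γ_F`; pairing with the `E_{p,q}` then kills the off-diagonal entries and makes the
diagonal constant, hence zero.
-/

attribute [local instance] LieRing.ofAssociativeRing LieAlgebra.ofAssociativeAlgebra

section General

open Finset Matrix

variable {n : ℕ}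

lemma FS_apply (S : Finset (Fin n × Fin n)) (A : M n) : FS S A = ∑ pq ∈ S, A pq.1 pq.2 := rfl

lemma adE_apply (H A : M n) : adE H A = ⁅H, A⁆ := (Ring.lie_def H A).symm

lemma diagonal_lie_apply (d : Fin n → ℂ) (y : M n) (p q : Fin n) :
    ⁅diagonal d, y⁆ p q = (d p - d q) * y p q := by
  rw [Ring.lie_def, Matrix.sub_apply, diagonal_mul, mul_diagonal]
  ring

lemma lie_single_apply (x : M n) (a b p q : Fin n) :
    ⁅x, single a b (1 : ℂ)⁆ p q = (if q = b then x p a else 0) - (if p = a then x b q else 0) := by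
  rw [Ring.lie_def, Matrix.sub_apply]
  congr 1
  · split_ifs with h
    · subst h; simp
    · simp [h]
  · split_ifs with h
    · subst h; simp
    · simp [h]

lemma sum_ite_fst_eq {α β R : Type*} [Fintype β] [DecidableEq α] [DecidableEq β] [AddCommMonoid R]
    (S : Finset (α × β)) (a : α) (f : α × β → R) :
    ∑ pq ∈ S, (if pq.1 = a then f pq else 0) = ∑ l with (a, l) ∈ S, f (a, l) := by
  rw [← sum_filter]
  apply sum_nbij' Prod.snd (Prod.mk a) <;> aesop

lemma sum_ite_snd_eq {α β R : Type*} [Fintype α] [DecidableEq α] [DecidableEq β] [AddCommMonoid R]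
    (S : Finset (α × β)) (b : β) (f : α × β → R) :
    ∑ pq ∈ S, (if pq.2 = b then f pq else 0) = ∑ i with (i, b) ∈ S, f (i, b) := by
  rw [← sum_filter]
  apply sum_nbij' Prod.fst (Prod.mk · b) <;> aesop

end General

section Kirillov

open Finset Matrix

variable {n : ℕ} {le : Fin n → Fin n → Prop}

lemma FS_lie_single (S : Finset (Fin n × Fin n)) (x : M n) (a b : Fin n) :
    FS S ⁅x, single a b 1⁆ = ∑ i with (i, b) ∈ S, x i a - ∑ l with (a, l) ∈ S, x b l := by
  simp only [FS_apply, lie_single_apply, sum_sub_distrib]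
  rw [sum_ite_snd_eq S b (fun pq => x pq.1 a), sum_ite_fst_eq S a (fun pq => x b pq.2)]

lemma FS_diagonal_lie (S : Finset (Fin n × Fin n)) (d : Fin n → ℂ) (y : M n) :
    FS S ⁅diagonal d, y⁆ = ∑ pq ∈ S, (d pq.1 - d pq.2) * y pq.1 pq.2 := by
  simp only [FS_apply, diagonal_lie_apply]

lemma single_mem_gA {a b : Fin n} (hab : le a b) (hne : a ≠ b) : single a b (1 : ℂ) ∈ gA le := by
  refine ⟨trace_single_eq_of_ne _ _ _ hne, fun p q _ hpq => ?_⟩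
  rw [single_apply_of_ne]
  rintro ⟨rfl, rfl⟩
  exact hpq hab

lemma diagonal_mem_gA {d : Fin n → ℂ} (hd : ∑ i, d i = 0) : diagonal d ∈ gA le :=
  ⟨by rwa [trace_diagonal], fun _ _ hpq _ => diagonal_apply_ne d hpq⟩

variable {S : Finset (Fin n × Fin n)} {x : M n}

lemma sum_eq_sum_of_mem_kirKer (hx : x ∈ kirKer (gA le) (FS S)) {a b : Fin n} (hab : le a b)
    (hne : a ≠ b) : ∑ i with (i, b) ∈ S, x i a = ∑ l with (a, l) ∈ S, x b l := by
  rw [← sub_eq_zero, ← FS_lie_single]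
  exact hx.2 _ (single_mem_gA hab hne)

/-- Test `x` against the trace-zero diagonal matrix `n E_{jj} - I`. -/
lemma sum_in_eq_sum_out_of_mem_kirKer (hx : x ∈ kirKer (gA le) (FS S)) (j : Fin n) :
    ∑ i with (i, j) ∈ S, x i j = ∑ l with (j, l) ∈ S, x j l := by
  set d : Fin n → ℂ := fun l => (if l = j then (n : ℂ) else 0) - 1
  have hd : ∑ l, d l = 0 := by simp [d, sum_sub_distrib]
  have h := hx.2 _ (diagonal_mem_gA (le := le) hd)
  rw [← lie_skew x (diagonal d), map_neg, neg_eq_zero, FS_diagonal_lie] at h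
  have hn : (n : ℂ) ≠ 0 := Nat.cast_ne_zero.2 j.pos.ne'
  simp only [d, sub_sub_sub_cancel_right, sub_mul, ite_mul, zero_mul, sum_sub_distrib] at h
  rw [sum_ite_fst_eq S j (fun pq => (n : ℂ) * x pq.1 pq.2),
    sum_ite_snd_eq S j (fun pq => (n : ℂ) * x pq.1 pq.2), ← mul_sum, ← mul_sum, ← mul_sub,
    mul_eq_zero, sub_eq_zero] at h
  exact (h.resolve_left hn).symm

end Kirillov

section Spectrum

open Finset Matrix Module Module.End

variable {n : ℕ}

lemma mem_eigenspace_adE_diagonal {d : Fin n → ℂ} {μ : ℂ} {A : M n} :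
    A ∈ eigenspace (adE (diagonal d)) μ ↔ ∀ p q, d p - d q ≠ μ → A p q = 0 := by
  rw [mem_eigenspace_iff, adE_apply]
  constructor
  · intro h p q hpq
    have h' := congr_fun₂ h p q
    rw [diagonal_lie_apply, Matrix.smul_apply, smul_eq_mul, ← sub_eq_zero, ← sub_mul] at h'
    exact (mul_eq_zero.1 h').resolve_left (sub_ne_zero.2 hpq)
  · intro h
    ext p q
    rw [diagonal_lie_apply, Matrix.smul_apply, smul_eq_mul]
    by_cases hpq : d p - d q = μ
    · rw [hpq]
    · rw [h p q hpq, mul_zero, mul_zero]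

def eigenspaceAdEDiagonalEquiv (d : Fin n → ℂ) (μ : ℂ) :
    eigenspace (adE (diagonal d)) μ ≃ₗ[ℂ] ({pq : Fin n × Fin n // d pq.1 - d pq.2 = μ} → ℂ) where
  toFun A t := (A : M n) t.1.1 t.1.2
  invFun f := ⟨of fun p q => if h : d p - d q = μ then f ⟨(p, q), h⟩ else 0,
    mem_eigenspace_adE_diagonal.2 fun p q h => by simp [h]⟩
  map_add' _ _ := rfl
  map_smul' _ _ := rfl
  left_inv A := by
    ext p q
    by_cases h : d p - d q = μ
    · simp [h]
    · simp [h, mem_eigenspace_adE_diagonal.1 A.2 p q h]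
  right_inv f := by
    ext t
    simp [t.2]

lemma finrank_eigenspace_adE_diagonal (d : Fin n → ℂ) (μ : ℂ) :
    finrank ℂ (eigenspace (adE (diagonal d)) μ) = #{pq : Fin n × Fin n | d pq.1 - d pq.2 = μ} := by
  rw [(eigenspaceAdEDiagonalEquiv d μ).finrank_eq, finrank_fintype_fun_eq_card,
    Fintype.card_subtype]

lemma lie_mem_eigenspace_adE {H x y : M n} {μ ν : ℂ} (hx : x ∈ eigenspace (adE H) μ)
    (hy : y ∈ eigenspace (adE H) ν) : ⁅x, y⁆ ∈ eigenspace (adE H) (μ + ν) := by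
  rw [mem_eigenspace_iff, adE_apply] at *
  rw [leibniz_lie, hx, hy, smul_lie, lie_smul, add_smul]

variable {F : M n →ₗ[ℂ] ℂ} {H : M n}

/-- `ad H` is a derivation, so `⁅x, y⁆` has eigenvalue `μ + ν`, and `F ∘ ad H = F` forces `F` to
vanish on every eigenspace other than the `1`-eigenspace. -/
lemma map_lie_eq_zero_of_mem_eigenspace (hH : ∀ y, F ⁅H, y⁆ = F y) {x y : M n} {μ ν : ℂ}
    (hx : x ∈ eigenspace (adE H) μ) (hy : y ∈ eigenspace (adE H) ν) (hμν : μ + ν ≠ 1) :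
    F ⁅x, y⁆ = 0 := by
  have h := hH ⁅x, y⁆
  rw [← adE_apply, mem_eigenspace_iff.1 (lie_mem_eigenspace_adE hx hy), map_smul,
    smul_eq_mul] at h
  have h' : (1 - (μ + ν)) * F ⁅x, y⁆ = 0 := by linear_combination -h
  exact (mul_eq_zero.1 h').resolve_left (sub_ne_zero.2 hμν.symm)

lemma IsFrobeniusOn.eq_of_isPrincipal {g : Submodule ℂ (M n)} (hF : IsFrobeniusOn g F)
    {H' : M n} (hH : IsPrincipal g F H) (hH' : IsPrincipal g F H') : H = H' :=
  sub_eq_zero.1 <| hF _ (g.sub_mem hH.1 hH'.1) fun y hy => by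
    rw [sub_lie, map_sub, hH.2 y hy, hH'.2 y hy, sub_self]

def kirillovForm (F : M n →ₗ[ℂ] ℂ) : M n →ₗ[ℂ] M n →ₗ[ℂ] ℂ :=
  LinearMap.mk₂ ℂ (fun x y => F ⁅x, y⁆) (by simp [add_lie]) (by simp [smul_lie])
    (by simp [lie_add]) (by simp [lie_smul])

/-- `x ↦ B_F(x, ·)` embeds the `μ`-eigenspace into the dual of the `ν`-eigenspace. -/
lemma eigMult_le_of_isFrobeniusOn {g : Submodule ℂ (M n)} (hF : IsFrobeniusOn g F)
    (hH : ∀ y, F ⁅H, y⁆ = F y) {μ ν : ℂ}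
    (hdec : g ≤ (g ⊓ eigenspace (adE H) μ) ⊔ (g ⊓ eigenspace (adE H) ν)) (hμ : μ + μ ≠ 1) :
    eigMult g H μ ≤ eigMult g H ν := by
  let φ := (kirillovForm F).compl₁₂ (g ⊓ eigenspace (adE H) μ).subtype
    (g ⊓ eigenspace (adE H) ν).subtype
  have hφ : Function.Injective φ := by
    rw [← LinearMap.ker_eq_bot, Submodule.eq_bot_iff]
    rintro ⟨x, hxg, hxμ⟩ hx
    refine Subtype.ext (hF x hxg fun y hy => ?_)
    obtain ⟨y₁, ⟨-, hy₁⟩, y₂, hy₂, rfl⟩ := Submodule.mem_sup.1 (hdec hy)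
    rw [lie_add, map_add, map_lie_eq_zero_of_mem_eigenspace hH hxμ hy₁ hμ, zero_add]
    exact LinearMap.congr_fun (LinearMap.mem_ker.1 hx) ⟨y₂, hy₂⟩
  simpa [eigMult, Subspace.dual_finrank_eq] using LinearMap.finrank_le_finrank_of_injective hφ

lemma eigMult_add_eigMult {g : Submodule ℂ (M n)} {μ ν : ℂ} (hμν : μ ≠ ν)
    (hdec : g ≤ (g ⊓ eigenspace (adE H) μ) ⊔ (g ⊓ eigenspace (adE H) ν)) :
    eigMult g H μ + eigMult g H ν = finrank ℂ g := by
  have hsup := le_antisymm (sup_le inf_le_left inf_le_left) hdec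
  have hinf : (g ⊓ eigenspace (adE H) μ) ⊓ (g ⊓ eigenspace (adE H) ν) = ⊥ :=
    ((adE H).disjoint_genEigenspace hμν 1 1).mono inf_le_right inf_le_right |>.eq_bot
  have := Submodule.finrank_sup_add_finrank_inf_eq (g ⊓ eigenspace (adE H) μ)
    (g ⊓ eigenspace (adE H) ν)
  rw [hsup, hinf, finrank_bot, add_zero] at this
  exact this.symm

lemma gA_le_sup_eigenspace_adE_diagonal {le : Fin n → Fin n → Prop} {d : Fin n → ℂ}
    (hd : ∀ p q, le p q → p ≠ q → d p - d q = 0 ∨ d p - d q = 1) :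
    gA le ≤ (gA le ⊓ eigenspace (adE (diagonal d)) 0) ⊔
      (gA le ⊓ eigenspace (adE (diagonal d)) 1) := by
  intro A hA
  classical
  set A₁ : M n := of fun p q => if d p - d q = 1 then A p q else 0
  have hA₁ : A₁ ∈ gA le := by
    refine ⟨Finset.sum_eq_zero fun p _ => by simp [A₁], fun p q hpq hle => ?_⟩
    simp [A₁, hA.2 p q hpq hle]
  have hA₁eig : A₁ ∈ eigenspace (adE (diagonal d)) 1 :=
    mem_eigenspace_adE_diagonal.2 fun p q h => by simp [A₁, h]
  have hA₀eig : A - A₁ ∈ eigenspace (adE (diagonal d)) 0 := by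
    refine mem_eigenspace_adE_diagonal.2 fun p q h => ?_
    by_cases h₁ : d p - d q = 1
    · simp [A₁, h₁]
    have hpq : p ≠ q := by rintro rfl; simp at h
    have hle : ¬ le p q := fun hle => (hd p q hle hpq).elim h h₁
    simp [A₁, h₁, hA.2 p q hpq hle]
  rw [← sub_add_cancel A A₁]
  exact Submodule.add_mem_sup ⟨(gA le).sub_mem hA hA₁, hA₀eig⟩ ⟨hA₁, hA₁eig⟩

end Spectrum

section P4

open Finset Matrix Module Module.End

variable {n : ℕ}

def p4Le (n : ℕ) (p q : Fin n) : Prop :=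
  p = q ∨ (p.val < q.val ∧ (q.val ≤ n - 2 ∨ p.val < n / 2))

def p4Pairs (n : ℕ) : Finset (Fin n × Fin n) :=
  {pq | (pq.1.val < (n - 1) / 2 ∧ pq.1.val + pq.2.val = n - 2) ∨
    (pq.1.val < n / 2 ∧ pq.2.val = n - 1)}

lemma mem_p4Pairs {p q : Fin n} : (p, q) ∈ p4Pairs n ↔
    (p.val < (n - 1) / 2 ∧ p.val + q.val = n - 2) ∨ (p.val < n / 2 ∧ q.val = n - 1) := by
  simp [p4Pairs]

lemma image_union_eq_p4Pairs (h0 : 0 < n) :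
    ((Icc 1 ((n - 1) / 2)).image fun i => (fmk n h0 (i - 1), fmk n h0 (n - i - 1))) ∪
      ((Icc 1 (n / 2)).image fun i => (fmk n h0 (i - 1), fmk n h0 (n - 1))) = p4Pairs n := by
  ext ⟨p, q⟩
  have := p.isLt
  have := q.isLt
  simp only [mem_union, mem_image, mem_Icc, Prod.mk.injEq, mem_p4Pairs, fmk, Fin.ext_iff]
  constructor
  · rintro (⟨i, hi, hp, hq⟩ | ⟨i, hi, hp, hq⟩) <;>
      rw [Nat.mod_eq_of_lt (by omega)] at hp hq <;> omega
  · rintro (⟨hp, hq⟩ | ⟨hp, hq⟩)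
    · exact Or.inl ⟨p + 1, by omega, by rw [Nat.mod_eq_of_lt (by omega)]; omega,
        by rw [Nat.mod_eq_of_lt (by omega)]; omega⟩
    · exact Or.inr ⟨p + 1, by omega, by rw [Nat.mod_eq_of_lt (by omega)]; omega,
        by rw [Nat.mod_eq_of_lt (by omega)]; omega⟩

def p4Weight (n : ℕ) (j : Fin n) : ℂ :=
  (if j.val < n / 2 then 1 else 0) - ((n / 2 : ℕ) : ℂ) / n

def p4Principal (n : ℕ) : M n := diagonal (p4Weight n)

lemma p4Weight_sub (p q : Fin n) : p4Weight n p - p4Weight n q =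
    (if p.val < n / 2 then 1 else 0) - (if q.val < n / 2 then 1 else 0) :=
  sub_sub_sub_cancel_right _ _ _

lemma p4Principal_mem (hn : 0 < n) : p4Principal n ∈ gA (p4Le n) := by
  refine diagonal_mem_gA ?_
  have : (n : ℂ) ≠ 0 := Nat.cast_ne_zero.2 hn.ne'
  simp [p4Weight, sum_sub_distrib, Fin.card_filter_val_lt, Nat.div_le_self]
  field_simp
  ring

lemma FS_p4Pairs_lie_p4Principal (y : M n) :
    FS (p4Pairs n) ⁅p4Principal n, y⁆ = FS (p4Pairs n) y := by
  rw [p4Principal, FS_diagonal_lie, FS_apply]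
  refine sum_congr rfl fun ⟨p, q⟩ h => ?_
  have := q.isLt
  rw [mem_p4Pairs] at h
  dsimp only
  rw [p4Weight_sub, if_pos (by omega), if_neg (by omega), sub_zero, one_mul]

lemma gA_p4Le_le_sup_eigenspace :
    gA (p4Le n) ≤ (gA (p4Le n) ⊓ eigenspace (adE (p4Principal n)) 0) ⊔
      (gA (p4Le n) ⊓ eigenspace (adE (p4Principal n)) 1) := by
  refine gA_le_sup_eigenspace_adE_diagonal fun p q hle hne => ?_
  have hpq : p.val < q.val := by
    rcases hle with h | h
    · exact absurd h hne
    · exact h.1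
  rw [p4Weight_sub]
  split_ifs <;> first | omega | norm_num

lemma eigMult_p4Principal_one :
    eigMult (gA (p4Le n)) (p4Principal n) 1 = n / 2 * (n - n / 2) := by
  have hle : eigenspace (adE (p4Principal n)) 1 ≤ gA (p4Le n) := by
    intro A hA
    rw [p4Principal, mem_eigenspace_adE_diagonal] at hA
    refine ⟨sum_eq_zero fun p _ => hA p p (by simp), fun p q _ hpq => hA p q fun h => hpq ?_⟩
    rw [p4Weight_sub] at h
    split_ifs at h with hp hq
    · norm_num at h
    · exact Or.inr ⟨by omega, Or.inr hp⟩
    all_goals norm_num at h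
  have hcard : #{pq : Fin n × Fin n | p4Weight n pq.1 - p4Weight n pq.2 = 1} =
      #((univ.filter fun p : Fin n => p.val < n / 2) ×ˢ
        (univ.filter fun q : Fin n => ¬ q.val < n / 2)) := by
    congr 1
    ext ⟨p, q⟩
    simp only [p4Weight_sub, mem_filter, mem_univ, true_and, mem_product]
    split_ifs <;> norm_num <;> omega
  rw [eigMult, inf_eq_right.2 hle, p4Principal, finrank_eigenspace_adE_diagonal, hcard,
    card_product, filter_not, card_sdiff, inter_univ, Fin.card_filter_val_lt, card_univ,
    Fintype.card_fin, min_eq_right (Nat.div_le_self n 2)]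

end P4

section P4Frobenius

open Finset Matrix

variable {n : ℕ} {x : M n}

lemma apply_eq_zero_of_not_p4Le (hx : x ∈ gA (p4Le n)) {p q : Fin n} (h : ¬ p4Le n p q) :
    x p q = 0 :=
  hx.2 p q (fun hpq => h (Or.inl hpq)) h

/-- `Γ_{F}` is a tree whose leaves are `p_{⌊n/2⌋+1}, …, p_{n-1}` (and `p_{⌊n/2⌋}` for even `n`);
balancing the flow at the leaves and then at `p₁, …, p_{⌊(n-1)/2⌋}` kills `x` on every edge. -/
lemma p4_kernel_eq_zero_on_pairs (hx : x ∈ kirKer (gA (p4Le n)) (FS (p4Pairs n))) :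
    ∀ pq ∈ p4Pairs n, x pq.1 pq.2 = 0 := by
  have hanti : ∀ i j : Fin n, i.val < (n - 1) / 2 → i.val + j.val = n - 2 → x i j = 0 := by
    intro i j hi hij
    have h := sum_in_eq_sum_out_of_mem_kirKer hx j
    rwa [sum_eq_single_of_mem i (by simp [mem_p4Pairs]; omega)
        fun i' hi' hne => by simp [mem_p4Pairs, Fin.ext_iff] at hi' hne; omega,
      sum_eq_zero fun l hl => by simp [mem_p4Pairs] at hl; omega] at h
  have hlast : ∀ i j : Fin n, i.val < n / 2 → j.val = n - 1 → x i j = 0 := by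
    intro i j hi hj
    have h := sum_in_eq_sum_out_of_mem_kirKer hx i
    rwa [sum_eq_zero fun i' hi' => by simp [mem_p4Pairs] at hi'; omega,
      sum_eq_single_of_mem j (by simp [mem_p4Pairs]; omega) fun l hl hne => by
        simp only [mem_filter, mem_univ, true_and, mem_p4Pairs] at hl
        rcases hl with hl | hl
        · exact hanti i l hl.1 hl.2
        · exact absurd (Fin.ext (hl.2.trans hj.symm)) hne, eq_comm] at h
  rintro ⟨p, q⟩ h
  rcases mem_p4Pairs.1 h with h | h
  exacts [hanti p q h.1 h.2, hlast p q h.1 h.2]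

lemma p4_kernel_eq_zero_of_add_lt (hx : x ∈ kirKer (gA (p4Le n)) (FS (p4Pairs n))) {p q : Fin n}
    (hpq : p.val < q.val) (hsum : p.val + q.val < n - 2) : x p q = 0 := by
  let b : Fin n := ⟨n - 2 - p.val, by omega⟩
  have h := sum_eq_sum_of_mem_kirKer hx (a := q) (b := b) (Or.inr ⟨by simp [b]; omega,
    Or.inl (by simp [b])⟩) (by simp [b, Fin.ext_iff]; omega)
  rwa [sum_eq_single_of_mem p (by simp [mem_p4Pairs, b]; omega)
      fun i hi hne => by simp [mem_p4Pairs, b, Fin.ext_iff] at hi hne; omega,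
    sum_eq_zero fun l hl => apply_eq_zero_of_not_p4Le hx.1 ?_] at h
  simp only [mem_filter, mem_univ, true_and, mem_p4Pairs] at hl
  simp only [p4Le, b, Fin.ext_iff]
  omega

lemma p4_kernel_eq_zero_of_lt_add (hx : x ∈ kirKer (gA (p4Le n)) (FS (p4Pairs n))) {p q : Fin n}
    (hpq : p.val < q.val) (hq : q.val ≤ n - 2) (hsum : n - 2 < p.val + q.val) : x p q = 0 := by
  let u : Fin n := ⟨n - 2 - q.val, by omega⟩
  have h := sum_eq_sum_of_mem_kirKer hx (a := u) (b := p) (Or.inr ⟨by simp [u]; omega,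
    Or.inl (by omega)⟩) (by simp [u, Fin.ext_iff]; omega)
  rwa [sum_eq_zero fun i hi => apply_eq_zero_of_not_p4Le hx.1 ?_,
    sum_eq_single_of_mem q (by simp [mem_p4Pairs, u]; omega) fun l hl hne => ?_, eq_comm] at h
  · simp only [mem_filter, mem_univ, true_and, mem_p4Pairs] at hl
    simp only [u] at hl hne
    by_cases hp : p.val < n / 2
    · exact p4_kernel_eq_zero_on_pairs hx (p, l) (mem_p4Pairs.2 (Or.inr ⟨hp, by omega⟩))
    · exact apply_eq_zero_of_not_p4Le hx.1 (by simp only [p4Le, Fin.ext_iff]; omega)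
  · simp only [mem_filter, mem_univ, true_and, mem_p4Pairs] at hi
    simp only [p4Le, u, Fin.ext_iff]
    omega

lemma p4_kernel_apply_eq_zero_of_ne (hx : x ∈ kirKer (gA (p4Le n)) (FS (p4Pairs n)))
    {p q : Fin n} (hpq : p ≠ q) : x p q = 0 := by
  by_cases hle : p4Le n p q
  swap
  · exact apply_eq_zero_of_not_p4Le hx.1 hle
  rcases hle with h | ⟨hlt, hrel⟩
  · exact absurd h hpq
  by_cases hq : q.val = n - 1
  · exact p4_kernel_eq_zero_on_pairs hx (p, q) (mem_p4Pairs.2 (Or.inr ⟨by omega, hq⟩))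
  rcases lt_trichotomy (p.val + q.val) (n - 2) with hsum | hsum | hsum
  · exact p4_kernel_eq_zero_of_add_lt hx hlt hsum
  · exact p4_kernel_eq_zero_on_pairs hx (p, q) (mem_p4Pairs.2 (Or.inl ⟨by omega, hsum⟩))
  · exact p4_kernel_eq_zero_of_lt_add hx hlt (by omega) hsum

lemma p4_kernel_apply_self_eq (hx : x ∈ kirKer (gA (p4Le n)) (FS (p4Pairs n))) {p N : Fin n}
    (hN : N.val = n - 1) : x p p = x N N := by
  have hcol : ∀ {a : Fin n} {s : Finset (Fin n)}, a ∈ s → ∑ i ∈ s, x i a = x a a := fun ha =>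
    sum_eq_single_of_mem _ ha fun i _ hne => p4_kernel_apply_eq_zero_of_ne hx hne
  have hrow : ∀ {b : Fin n} {s : Finset (Fin n)}, b ∈ s → ∑ l ∈ s, x b l = x b b := fun hb =>
    sum_eq_single_of_mem _ hb fun l _ hne => p4_kernel_apply_eq_zero_of_ne hx (Ne.symm hne)
  have hlow : ∀ u : Fin n, u.val < n / 2 → x u u = x N N := by
    intro u hu
    have h := sum_eq_sum_of_mem_kirKer hx (a := u) (b := N) (Or.inr ⟨by omega, Or.inr hu⟩)
      (by simp [Fin.ext_iff]; omega)
    rwa [hcol (by simp [mem_p4Pairs]; omega), hrow (by simp [mem_p4Pairs]; omega)] at h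
  by_cases hp : p.val < n / 2
  · exact hlow p hp
  by_cases hpN : p = N
  · rw [hpN]
  let u : Fin n := ⟨n - 2 - p.val, by omega⟩
  have hp_last : p.val ≠ n - 1 := fun h => hpN (Fin.ext (h.trans hN.symm))
  have h := sum_eq_sum_of_mem_kirKer hx (a := u) (b := p) (Or.inr ⟨by simp [u]; omega,
    Or.inl (by omega)⟩) (by simp [u, Fin.ext_iff]; omega)
  rw [hcol (by simp [mem_p4Pairs, u]; omega), hrow (by simp [mem_p4Pairs, u]; omega)] at h
  rw [← h, hlow u (by simp [u]; omega)]

theorem isFrobeniusOn_gA_p4Le (hn : 4 ≤ n) : IsFrobeniusOn (gA (p4Le n)) (FS (p4Pairs n)) := by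
  intro x hxg hx
  have hx' : x ∈ kirKer (gA (p4Le n)) (FS (p4Pairs n)) := ⟨hxg, hx⟩
  let N : Fin n := ⟨n - 1, by omega⟩
  have htrace : (n : ℂ) * x N N = 0 := by
    rw [← hxg.1, trace]
    simp [p4_kernel_apply_self_eq hx' (N := N) rfl]
  have hN : x N N = 0 := (mul_eq_zero.1 htrace).resolve_left (Nat.cast_ne_zero.2 (by omega))
  ext p q
  by_cases hpq : p = q
  · rw [hpq, p4_kernel_apply_self_eq hx' (N := N) rfl, hN, Matrix.zero_apply]
  · rw [p4_kernel_apply_eq_zero_of_ne hx' hpq, Matrix.zero_apply]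

end P4Frobenius

/-- for `n ≥ 4`, the poset `P_{4,n}` (`p₁ ≼ ⋯ ≼ p_{n-1}` together
with `p_{⌊n/2⌋} ≼ p_n`, elements `pᵢ` indexed as `i - 1 : Fin n`) with
`F = ∑_{i=1}^{⌊(n-1)/2⌋} E*_{p_i,p_{n-i}} + ∑_{i=1}^{⌊n/2⌋} E*_{p_i,p_n}`:
`F` is Frobenius on `g_A(P_{4,n})` and the spectrum is binary, with eigenvalues
`0` and `1` each of multiplicity `(n²-1)/4` for odd `n` and `n²/4` for even `n`. -/
theorem P4n_frobenius_binary_spectrum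
    (n : ℕ) (hn : 4 ≤ n)
    (le : Fin n → Fin n → Prop)
    (hle : ∀ p q : Fin n, le p q ↔
      p = q ∨ (p.val < q.val ∧ (q.val ≤ n - 2 ∨ p.val < n / 2)))
    (S : Finset (Fin n × Fin n))
    (hS : S =
      ((Finset.Icc 1 ((n - 1) / 2)).image fun i =>
        (fmk n (by omega) (i - 1), fmk n (by omega) (n - i - 1))) ∪
      ((Finset.Icc 1 (n / 2)).image fun i =>
        (fmk n (by omega) (i - 1), fmk n (by omega) (n - 1)))) :
    IsFrobeniusOn (gA le) (FS S) ∧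
    ∀ H : M n, IsPrincipal (gA le) (FS S) H →
      eigMult (gA le) H 0 = eigMult (gA le) H 1 ∧
      eigMult (gA le) H 0 + eigMult (gA le) H 1 = Module.finrank ℂ ↥(gA le) ∧
      (Odd n → 4 * eigMult (gA le) H 0 = n ^ 2 - 1) ∧
      (Even n → 4 * eigMult (gA le) H 0 = n ^ 2) := by
  obtain rfl : le = p4Le n := funext₂ fun p q => propext (hle p q)
  obtain rfl : S = p4Pairs n := hS.trans (image_union_eq_p4Pairs _)
  have hF := isFrobeniusOn_gA_p4Le hn
  refine ⟨hF, fun H hH => ?_⟩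
  obtain rfl : p4Principal n = H := hF.eq_of_isPrincipal
    ⟨p4Principal_mem (by omega), fun y _ => FS_p4Pairs_lie_p4Principal y⟩ hH
  have hdec := gA_p4Le_le_sup_eigenspace (n := n)
  have h01 := le_antisymm
    (eigMult_le_of_isFrobeniusOn hF FS_p4Pairs_lie_p4Principal hdec (by norm_num))
    (eigMult_le_of_isFrobeniusOn hF FS_p4Pairs_lie_p4Principal (hdec.trans_eq (sup_comm _ _))
      (by norm_num))
  refine ⟨h01, eigMult_add_eigMult zero_ne_one hdec, fun ⟨k, hk⟩ => ?_, fun ⟨k, hk⟩ => ?_⟩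
  all_goals
    rw [h01, eigMult_p4Principal_one, hk]
  · rw [show (2 * k + 1) / 2 = k by omega, show 2 * k + 1 - k = k + 1 by omega]
    ring_nf
    omega
  · rw [show (k + k) / 2 = k by omega, show k + k - k = k by omega]
    ring

end
end LiePosets
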